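/- There exists p₀ > 0 such that for all 0 < p ≤ p₀ and all 0 ≤ x ≤ 1 − p, one has I_p(p + x) ≥ x² · I_p(1 − 1/log(1/p)). Moreover, I_p(1 − 1/log(1/p)) / I_p(1) → 1 as p → 0⁺, where I_p(1) = log(1/p); consequently I_p(p+x) ≥ (1+o(1)) x² I_p(1) uniformly in x as p → 0⁺. -/

import Mathlib

open Real Filter

/-- The relative entropy function `I_p(x) = x log(x/p) + (1-x) log((1-x)/(1-p))`
(with the convention `0 · log 0 = 0`, automatic since `Real.log 0 = 0`). -/
noncomputable def Ip (p x : ℝ) : ℝ :=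
  x * Real.log (x / p) + (1 - x) * Real.log ((1 - x) / (1 - p))

/-!
Bounding the second term of `I_p(p + x)` by `log t ≥ 1 - 1/t` reduces the first claim to
`C x² ≤ (p + x) log((p + x)/p) - x` on `[0, 1 - p]`, where `C = I_p(1 - 1/L)` and `L = log(1/p)`.
The difference of the two sides vanishes at `0` and has a concave derivative vanishing at `0`,
so it increases and then decreases, and only the endpoint `x = 1 - p` has to be checked; there
it follows from `C ≤ L - 1 + p`. For the limit, with `u = 1/L`, the ratio `I_p(1 - u)/L` is an
explicit function of `(u, p)`, continuous at `(0, 0)` with value `1`.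
-/

open Set Topology

theorem ConcaveOn.neg_of_nonneg_of_neg {s : Set ℝ} {g : ℝ → ℝ} (hg : ConcaveOn ℝ s g)
    {a x y : ℝ} (ha : a ∈ s) (hy : y ∈ s) (hax : a < x) (hxy : x ≤ y) (hga : 0 ≤ g a)
    (hgx : g x < 0) : g y < 0 := by
  have hay : 0 < y - a := by linarith
  have hcomb := hg.2 ha hy (div_nonneg (sub_nonneg.2 hxy) hay.le)
    (div_nonneg (sub_nonneg.2 hax.le) hay.le)
    (by rw [← add_div, div_eq_one_iff_eq hay.ne']; ring)
  have hx : (y - x) / (y - a) * a + (x - a) / (y - a) * y = x := by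
    field_simp; ring
  simp only [smul_eq_mul, hx] at hcomb
  by_contra! hgy
  have : 0 ≤ (x - a) / (y - a) := div_nonneg (sub_nonneg.2 hax.le) hay.le
  have : 0 ≤ (y - x) / (y - a) * g a + (x - a) / (y - a) * g y := by positivity
  linarith

/-- A concave derivative that starts nonnegative changes sign at most once, from `+` to `-`,
so `f` increases and then decreases. -/
theorem le_of_hasDerivAt_of_concaveOn {f f' : ℝ → ℝ} {a b c : ℝ}
    (hf : ∀ x ∈ Icc a b, HasDerivAt f (f' x) x) (hf' : ConcaveOn ℝ (Icc a b) f')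
    (hf'a : 0 ≤ f' a) (ha : c ≤ f a) (hb : c ≤ f b) {x : ℝ} (hx : x ∈ Icc a b) : c ≤ f x := by
  have hcont : ContinuousOn f (Icc a b) := fun y hy => (hf y hy).continuousAt.continuousWithinAt
  rcases lt_or_ge (f' x) 0 with hx' | hx'
  · have hax : a < x := hx.1.lt_of_ne (by rintro rfl; linarith)
    have hanti : AntitoneOn f (Icc x b) := by
      refine antitoneOn_of_hasDerivWithinAt_nonpos (f' := f') (convex_Icc x b)
        (hcont.mono (Icc_subset_Icc_left hx.1)) (fun y hy => ?_) (fun y hy => ?_)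
      all_goals rw [interior_Icc] at hy
      · exact (hf y ⟨hax.le.trans hy.1.le, hy.2.le⟩).hasDerivWithinAt
      · exact (hf'.neg_of_nonneg_of_neg (left_mem_Icc.2 (hax.le.trans hx.2))
          ⟨hax.le.trans hy.1.le, hy.2.le⟩ hax hy.1.le hf'a hx').le
    exact hb.trans (hanti ⟨le_rfl, hx.2⟩ ⟨hx.2, le_rfl⟩ hx.2)
  · have hmono : MonotoneOn f (Icc a x) := by
      refine monotoneOn_of_hasDerivWithinAt_nonneg (f' := f') (convex_Icc a x)
        (hcont.mono (Icc_subset_Icc_right hx.2)) (fun y hy => ?_) (fun y hy => ?_)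
      all_goals rw [interior_Icc] at hy
      · exact (hf y ⟨hy.1.le, hy.2.le.trans hx.2⟩).hasDerivWithinAt
      · by_contra! hy'
        exact (hf'.neg_of_nonneg_of_neg (left_mem_Icc.2 (hy.1.le.trans (hy.2.le.trans hx.2)))
          hx hy.1 hy.2.le hf'a hy').not_ge hx'
    exact ha.trans (hmono ⟨le_rfl, hx.1⟩ ⟨hx.1, le_rfl⟩ hx.1)

theorem sub_le_mul_log_div {a b : ℝ} (ha : 0 ≤ a) (hb : 0 < b) : a - b ≤ a * log (a / b) := by
  rcases ha.eq_or_lt with rfl | ha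
  · simpa using hb.le
  have h := mul_le_mul_of_nonneg_left (one_sub_inv_le_log_of_pos (div_pos ha hb)) ha.le
  rwa [inv_div, mul_sub, mul_one, mul_div_cancel₀ _ ha.ne'] at h

theorem mul_log_div_sub_le_Ip {p q : ℝ} (hp : p < 1) (hq : q ≤ 1) :
    q * log (q / p) - (q - p) ≤ Ip p q := by
  have := sub_le_mul_log_div (sub_nonneg.2 hq) (sub_pos.2 hp)
  rw [Ip]
  linarith

theorem Ip_eq {p x : ℝ} (hp₀ : p ≠ 0) (hp₁ : p ≠ 1) (hx₀ : x ≠ 0) (hx₁ : x ≠ 1) :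
    Ip p x = x * log x + (1 - x) * log (1 - x) - x * log p - (1 - x) * log (1 - p) := by
  rw [Ip, log_div hx₀ hp₀, log_div (sub_ne_zero.2 hx₁.symm) (sub_ne_zero.2 hp₁.symm)]
  ring

/-- `x ↦ (p + x) log((p + x)/p) - x - C x²` has the concave derivative `log((p + x)/p) - 2 C x`,
which vanishes at `0`. -/
theorem mul_sq_le_add_mul_log_div_sub {p b C : ℝ} (hp : 0 < p)
    (hb : C * b ^ 2 ≤ (p + b) * log ((p + b) / p) - b) {x : ℝ} (hx : x ∈ Icc 0 b) :
    C * x ^ 2 ≤ (p + x) * log ((p + x) / p) - x := by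
  have hpos : ∀ y ∈ Icc 0 b, 0 < p + y := fun y hy => by linarith [hy.1]
  have hlog : ∀ y ∈ Icc 0 b, log ((p + y) / p) = log (p + y) - log p :=
    fun y hy => log_div (hpos y hy).ne' hp.ne'
  set f := fun y => (p + y) * (log (p + y) - log p) - y - C * y ^ 2
  have hderiv : ∀ y ∈ Icc 0 b, HasDerivAt f (log (p + y) - log p - 2 * C * y) y := by
    intro y hy
    have hpy : HasDerivAt (fun y => p + y) 1 y := (hasDerivAt_id' y).const_add p
    have := ((hpy.mul ((hpy.log (hpos y hy).ne').sub_const (log p))).sub (hasDerivAt_id' y)).sub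
      ((hasDerivAt_pow 2 y).const_mul C)
    refine this.congr_deriv ?_
    field_simp [(hpos y hy).ne']
    ring
  have hconc : ConcaveOn ℝ (Icc 0 b) (fun y => log (p + y) - log p - 2 * C * y) := by
    have hlog : ConcaveOn ℝ (Icc 0 b) (fun y => log (p + y)) :=
      (strictConcaveOn_log_Ioi.concaveOn.translate_right p).subset hpos (convex_Icc 0 b)
    refine ((hlog.add_const (-log p)).sub
      ((LinearMap.mul ℝ ℝ (2 * C)).convexOn (convex_Icc 0 b))).congr fun y _ => ?_
    simp only [Pi.add_apply, Pi.sub_apply, LinearMap.mul_apply']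
    ring
  have hb0 : 0 ≤ b := hx.1.trans hx.2
  have key := le_of_hasDerivAt_of_concaveOn hderiv hconc (by simp) (c := 0) (by simp [f])
    (by simp only [f]; rw [← hlog b ⟨hb0, le_rfl⟩]; linarith) hx
  simp only [f] at key
  rw [hlog x hx]
  linarith

theorem two_le_log_one_div {p : ℝ} (hp : 0 < p) (hp₀ : p ≤ exp (-2)) : 2 ≤ log (1 / p) := by
  rw [one_div, log_inv, le_neg]
  simpa using log_le_log hp hp₀

theorem Ip_one_sub_inv_log_le {p : ℝ} (hp : 0 < p) (hp₀ : p ≤ exp (-2)) :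
    Ip p (1 - 1 / log (1 / p)) ≤ log (1 / p) - 1 + p := by
  set L := log (1 / p)
  set u := 1 / L
  have hL : 2 ≤ L := two_le_log_one_div hp hp₀
  have hu₀ : 0 < u := by positivity
  have hu₁ : u ≤ 1 / 2 := one_div_le_one_div_of_le two_pos hL
  have huL : u * L = 1 := one_div_mul_cancel (by positivity)
  have hp₁ : p ≤ 1 / 2 := by
    refine hp₀.trans ?_
    rw [exp_neg, ← one_div]
    exact one_div_le_one_div_of_le two_pos (by linarith [add_one_le_exp (2 : ℝ)])
  have h1p : 0 < 1 - p := by linarith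
  have hlog1p : -log (1 - p) ≤ p / (1 - p) := by
    have := one_sub_inv_le_log_of_pos h1p
    have e : p / (1 - p) = (1 - p)⁻¹ - 1 := by field_simp; ring
    linarith
  have hlogp : log p = -L := by simp only [L, one_div, log_inv, neg_neg]
  -- `Ip p (1 - u) = L - 1 - H(u) - u log(1 - p)`, with `H` the binary entropy.
  rw [Ip_eq hp.ne' (by linarith) (by linarith) (by linarith), sub_sub_cancel, hlogp]
  have h₁ := mul_log_nonpos (show 0 ≤ 1 - u by linarith) (show 1 - u ≤ 1 by linarith)
  have h₂ := mul_log_nonpos hu₀.le (show u ≤ 1 by linarith)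
  have h₃ : u * -log (1 - p) ≤ p :=
    calc u * -log (1 - p) ≤ (1 - p) * (p / (1 - p)) := by
          gcongr
          · exact neg_nonneg.2 (log_nonpos h1p.le (by linarith))
          · linarith
      _ = p := mul_div_cancel₀ p h1p.ne'
  nlinarith

theorem Ip_one_sub_inv_log_mul_sq_le {p : ℝ} (hp : 0 < p) (hp₀ : p ≤ exp (-2)) :
    Ip p (1 - 1 / log (1 / p)) * (1 - p) ^ 2 ≤ log (1 / p) - (1 - p) := by
  have hC := Ip_one_sub_inv_log_le hp hp₀
  have hL := two_le_log_one_div hp hp₀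
  have hp₁ : p < 1 := hp₀.trans_lt (exp_lt_one_iff.2 (by norm_num))
  have hsq : (1 - p) ^ 2 ≤ 1 := by nlinarith
  rcases le_total 0 (Ip p (1 - 1 / log (1 / p))) with hC₀ | hC₀
  · nlinarith [mul_le_mul_of_nonneg_left hsq hC₀]
  · nlinarith [mul_nonpos_of_nonpos_of_nonneg hC₀ (sq_nonneg (1 - p))]

theorem Ip_one_sub_div_log_one_div {p u : ℝ} (hp₀ : 0 < p) (hp₁ : p < 1) (hu₁ : u ≠ 1)
    (hu : u * log (1 / p) = 1) :
    Ip p (1 - u) / log (1 / p) =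
      u * ((1 - u) * log (1 - u)) + u * (u * log u) + (1 - u) - u ^ 2 * log (1 - p) := by
  have hu₀ : u ≠ 0 := by rintro rfl; simp at hu
  have hL : log (1 / p) ≠ 0 := by rintro h; rw [h, mul_zero] at hu; exact zero_ne_one hu
  rw [Ip_eq hp₀.ne' hp₁.ne (sub_ne_zero.2 hu₁.symm) (by simpa using hu₀), sub_sub_cancel,
    div_eq_iff hL]
  have hlogp : log p = -log (1 / p) := by simp
  rw [hlogp]
  linear_combination (-(1 - u) * log (1 - u) - u * log u + u * log (1 - p)) * hu

theorem tendsto_log_one_div_nhdsGT_zero : Tendsto (fun p => log (1 / p)) (𝓝[>] 0) atTop :=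
  (tendsto_neg_atBot_atTop.comp tendsto_log_nhdsGT_zero).congr fun p => by simp

theorem tendsto_Ip_one_sub_inv_log_div_log :
    Tendsto (fun p => Ip p (1 - 1 / log (1 / p)) / log (1 / p)) (𝓝[>] 0) (𝓝 1) := by
  set G : ℝ × ℝ → ℝ := fun q =>
    q.1 * ((1 - q.1) * log (1 - q.1)) + q.1 * (q.1 * log q.1) + (1 - q.1) - q.1 ^ 2 * log (1 - q.2)
  have hG : ContinuousAt G (0, 0) := by fun_prop (disch := norm_num)
  have hu : Tendsto (fun p => 1 / log (1 / p)) (𝓝[>] 0) (𝓝 0) :=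
    tendsto_log_one_div_nhdsGT_zero.const_div_atTop 1
  have hlim := hG.tendsto.comp (hu.prodMk_nhds (nhdsWithin_le_nhds (a := (0 : ℝ))))
  have hG₀ : G (0, 0) = 1 := by simp [G]
  rw [hG₀] at hlim
  refine hlim.congr' ?_
  filter_upwards [tendsto_log_one_div_nhdsGT_zero.eventually_gt_atTop 1,
    Ioo_mem_nhdsGT one_pos] with p hL hp
  exact (Ip_one_sub_div_log_one_div hp.1 hp.2 ((div_lt_one (by linarith)).2 hL).ne
    (one_div_mul_cancel (by positivity))).symm

/-- There exists `p₀ > 0` such that for all `0 < p ≤ p₀` and `0 ≤ x ≤ 1-p`,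
`I_p(p+x) ≥ x² I_p(1 - 1/log(1/p))`; moreover `I_p(1 - 1/log(1/p)) / I_p(1) → 1` as
`p → 0⁺`, where `I_p(1) = log(1/p)`. -/
theorem Ip_global_quadratic_lower_bound :
    (∃ p₀ > (0 : ℝ), ∀ p : ℝ, 0 < p → p ≤ p₀ → ∀ x : ℝ, 0 ≤ x → x ≤ 1 - p →
        Ip p (p + x) ≥ x ^ 2 * Ip p (1 - 1 / Real.log (1 / p)))
      ∧ Tendsto (fun p : ℝ => Ip p (1 - 1 / Real.log (1 / p)) / Real.log (1 / p))
          (nhdsWithin 0 (Set.Ioi 0)) (nhds 1) := by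
  refine ⟨⟨exp (-2), exp_pos _, fun p hp hp₀ x hx₀ hx₁ => ?_⟩,
    tendsto_Ip_one_sub_inv_log_div_log⟩
  have hp₁ : p < 1 := hp₀.trans_lt (exp_lt_one_iff.2 (by norm_num))
  have hend : Ip p (1 - 1 / log (1 / p)) * (1 - p) ^ 2 ≤
      (p + (1 - p)) * log ((p + (1 - p)) / p) - (1 - p) := by
    simpa using Ip_one_sub_inv_log_mul_sq_le hp hp₀
  calc x ^ 2 * Ip p (1 - 1 / log (1 / p))
      = Ip p (1 - 1 / log (1 / p)) * x ^ 2 := mul_comm _ _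
    _ ≤ (p + x) * log ((p + x) / p) - x :=
        mul_sq_le_add_mul_log_div_sub hp hend ⟨hx₀, hx₁⟩
    _ ≤ Ip p (p + x) := by
        simpa using mul_log_div_sub_le_Ip hp₁ (show p + x ≤ 1 by linarith)
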